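/- For every real η > 0, every integer n ≥ 2, and every s ∈ S_n⁻, the maximum-likelihood estimate satisfies P[â_ML(U₁ⁿ) − a < −η] ≤ ∏_{ℓ=1}^{n−1} (1 − 2σ²β_ℓ)^{−1/2}; equivalently, −(1/n)·log P[â_ML(U₁ⁿ) − a < −η] ≥ sup_{s ∈ S_n⁻} (1/(2n)) Σ_{ℓ=1}^{n−1} log(1 − 2σ²β_ℓ). -/

import Mathlib

open MeasureTheory ProbabilityTheory Finset

/-- The sequence `β_ℓ` from the paper: `β₁ = (σ²s² − 2ηs)/2` and
`β_ℓ = ([a² + 2σ²s(−a+η)]·β_{ℓ−1} + β₁)/(1 − 2σ²β_{ℓ−1})` for `ℓ ≥ 2`. -/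
noncomputable def betaSeq (a σ η s : ℝ) : ℕ → ℝ
  | 0 => 0
  | 1 => (σ ^ 2 * s ^ 2 - 2 * η * s) / 2
  | (ℓ + 2) =>
      ((a ^ 2 + 2 * σ ^ 2 * s * (-a + η)) * betaSeq a σ η s (ℓ + 1)
            + (σ ^ 2 * s ^ 2 - 2 * η * s) / 2)
        / (1 - 2 * σ ^ 2 * betaSeq a σ η s (ℓ + 1))

/-- The set `S_n⁻ = {s > 0 : β_ℓ < 1/(2σ²) for all 1 ≤ ℓ ≤ n}`. -/
def Sminus (a σ η : ℝ) (n : ℕ) : Set ℝ :=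
  {s : ℝ | 0 < s ∧ ∀ ℓ ∈ Finset.Icc 1 n, betaSeq a σ η s ℓ < 1 / (2 * σ ^ 2)}

/-- The maximum-likelihood estimate `â_ML(u₁ⁿ) = (Σ_{i=1}^{n−1} uᵢu_{i+1}) / (Σ_{i=1}^{n−1} uᵢ²)`. -/
noncomputable def aML {Ω : Type*} (U : ℕ → Ω → ℝ) (n : ℕ) (ω : Ω) : ℝ :=
  (∑ i ∈ Finset.Icc 1 (n - 1), U i ω * U (i + 1) ω)
    / (∑ i ∈ Finset.Icc 1 (n - 1), (U i ω) ^ 2)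


/-!
On the event `â_ML − a < −η` (away from the null event `Z₁ = 0`) the sum
`L = Σ_{i<n} uᵢ (u_{i+1} − (a − η) uᵢ) = Σ_{i<n} (uᵢ Z_{i+1} + η uᵢ²)` is negative, so by the
Chernoff bound the probability is at most `E[exp (−s L)]`. Integrating out `Zₙ, Z_{n−1}, …` one at
a time, each step is the Gaussian integral of the exponential of a quadratic: it contributes a
factor `(1 − 2σ²c)^(−1/2)` and turns the current weight `c` of `u_k²` into
`a²c − sη + σ²(2ac − s)² / (2(1 − 2σ²c))`. Starting from `c = β₀ = 0`, this Riccati map generates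
exactly the sequence `β_ℓ`.
-/

open Real
open scoped NNReal ENNReal

@[to_additive sum_Icc_one_sub_one_eq_sum_range]
lemma prod_Icc_one_sub_one_eq_prod_range {M : Type*} [CommMonoid M] {f : ℕ → M} (hf : f 0 = 1)
    (n : ℕ) : ∏ i ∈ Icc 1 (n - 1), f i = ∏ i ∈ range n, f i := by
  rcases n with _ | n
  · simp
  · rw [prod_range_eq_mul_Ico f n.succ_pos, Nat.succ_eq_add_one, hf, one_mul,
      Ico_add_one_right_eq_Icc, Nat.add_sub_cancel]

lemma measure_lt_zero_le_lintegral_exp {Ω : Type*} [MeasurableSpace Ω] (μ : Measure Ω)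
    {f : Ω → ℝ} (hf : Measurable f) {s : ℝ} (hs : 0 ≤ s) :
    μ {ω | f ω < 0} ≤ ∫⁻ ω, ENNReal.ofReal (rexp (-s * f ω)) ∂μ := by
  calc μ {ω | f ω < 0} ≤ μ {ω | 1 ≤ ENNReal.ofReal (rexp (-s * f ω))} := by
        refine measure_mono fun ω (hω : f ω < 0) => ENNReal.one_le_ofReal.2 (one_le_exp_iff.2 ?_)
        nlinarith
    _ ≤ ∫⁻ ω, ENNReal.ofReal (rexp (-s * f ω)) ∂μ := by
        simpa using mul_meas_ge_le_lintegral₀ (μ := μ)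
          (f := fun ω => ENNReal.ofReal (rexp (-s * f ω))) (by fun_prop) 1

lemma gaussianPDFReal_mul_exp_quadratic {v w : ℝ≥0} (hv : v ≠ 0) {c : ℝ} (hc : 2 * v * c < 1)
    (hw : (w : ℝ) = v / (1 - 2 * v * c)) (b d t : ℝ) :
    gaussianPDFReal 0 v t * rexp (c * t ^ 2 + b * t + d)
      = (1 - 2 * v * c) ^ (-(1 / 2 : ℝ)) * rexp (d + v * b ^ 2 / (2 * (1 - 2 * v * c)))
        * gaussianPDFReal (w * b) w t := by
  have hD : 0 < 1 - 2 * v * c := by linarith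
  have : 0 < √(1 - 2 * v * c) := sqrt_pos.2 hD
  have : 0 < √(2 * π * v) := sqrt_pos.2 (by positivity)
  have hexp : -(t - 0) ^ 2 / (2 * v) + (c * t ^ 2 + b * t + d)
      = d + v * b ^ 2 / (2 * (1 - 2 * v * c)) + -(t - w * b) ^ 2 / (2 * w) := by
    rw [hw]; field_simp; ring
  rw [gaussianPDFReal, gaussianPDFReal, mul_assoc, ← exp_add, hexp, exp_add, hw,
    rpow_neg hD.le, ← sqrt_eq_rpow, mul_div_assoc' (2 * π), sqrt_div' _ hD.le]
  field_simp

lemma lintegral_exp_quadratic_gaussianReal (v : ℝ≥0) {c : ℝ} (hc : 2 * v * c < 1) (b d : ℝ) :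
    ∫⁻ t, ENNReal.ofReal (rexp (c * t ^ 2 + b * t + d)) ∂gaussianReal 0 v
      = ENNReal.ofReal ((1 - 2 * v * c) ^ (-(1 / 2 : ℝ))
          * rexp (d + v * b ^ 2 / (2 * (1 - 2 * v * c)))) := by
  rcases eq_or_ne v 0 with rfl | hv
  · simp [gaussianReal_zero_var]
  have hD : 0 < 1 - 2 * v * c := by linarith
  have hv0 : 0 < v := pos_iff_ne_zero.2 hv
  lift v / (1 - 2 * v * c) to ℝ≥0 using by positivity with w hw
  have hw0 : w ≠ 0 := by
    rw [← NNReal.coe_ne_zero, hw]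
    positivity
  rw [gaussianReal_of_var_ne_zero 0 hv, lintegral_withDensity_eq_lintegral_mul _
    (measurable_gaussianPDF 0 v) (by fun_prop)]
  simp only [Pi.mul_apply, gaussianPDF, ← ENNReal.ofReal_mul (gaussianPDFReal_nonneg _ _ _),
    gaussianPDFReal_mul_exp_quadratic hv hc hw, ENNReal.ofReal_mul (by positivity :
      0 ≤ (1 - 2 * v * c) ^ (-(1 / 2 : ℝ)) * rexp (d + v * b ^ 2 / (2 * (1 - 2 * v * c))))]
  rw [lintegral_const_mul _ (measurable_gaussianPDFReal _ _).ennreal_ofReal, ← gaussianPDF_def,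
    lintegral_gaussianPDF_eq_one _ hw0, mul_one]

lemma measure_eq_zero_of_map_eq_gaussianReal {Ω : Type*} [MeasurableSpace Ω] {μ : Measure Ω}
    {X : Ω → ℝ} (hX : Measurable X) {m : ℝ} {v : ℝ≥0} (hv : v ≠ 0)
    (hXlaw : μ.map X = gaussianReal m v) (x : ℝ) : μ {ω | X ω = x} = 0 := by
  have := gaussianReal_absolutelyContinuous m hv (measure_singleton x)
  rwa [← hXlaw, Measure.map_apply hX (measurableSet_singleton x)] at this

lemma lintegral_exp_quadratic_of_indepFun {Ω β : Type*} [MeasurableSpace Ω] [MeasurableSpace β]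
    {μ : Measure Ω} [IsFiniteMeasure μ] {Y : Ω → β} {X : Ω → ℝ} (hY : Measurable Y)
    (hX : Measurable X) (hYX : IndepFun Y X μ) {v : ℝ≥0} (hXlaw : μ.map X = gaussianReal 0 v)
    {c : ℝ} (hc : 2 * v * c < 1) {b d : β → ℝ} (hb : Measurable b) (hd : Measurable d) :
    ∫⁻ ω, ENNReal.ofReal (rexp (c * X ω ^ 2 + b (Y ω) * X ω + d (Y ω))) ∂μ
      = ENNReal.ofReal ((1 - 2 * v * c) ^ (-(1 / 2 : ℝ)))
        * ∫⁻ ω, ENNReal.ofReal (rexp (d (Y ω) + v * b (Y ω) ^ 2 / (2 * (1 - 2 * v * c)))) ∂μ := by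
  have hD : 0 < 1 - 2 * v * c := by linarith
  have hF : Measurable fun p : β × ℝ =>
      ENNReal.ofReal (rexp (c * p.2 ^ 2 + b p.1 * p.2 + d p.1)) := by fun_prop
  calc ∫⁻ ω, ENNReal.ofReal (rexp (c * X ω ^ 2 + b (Y ω) * X ω + d (Y ω))) ∂μ
      = ∫⁻ p, ENNReal.ofReal (rexp (c * p.2 ^ 2 + b p.1 * p.2 + d p.1))
          ∂((μ.map Y).prod (gaussianReal 0 v)) := by
        rw [← hXlaw, ← (indepFun_iff_map_prod_eq_prod_map_map hY.aemeasurable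
          hX.aemeasurable).1 hYX, lintegral_map hF (hY.prodMk hX)]
    _ = ∫⁻ y, ENNReal.ofReal ((1 - 2 * v * c) ^ (-(1 / 2 : ℝ))
          * rexp (d y + v * b y ^ 2 / (2 * (1 - 2 * v * c)))) ∂(μ.map Y) := by
        rw [lintegral_prod _ hF.aemeasurable]
        simp only [lintegral_exp_quadratic_gaussianReal v hc]
    _ = _ := by
        simp only [ENNReal.ofReal_mul (rpow_nonneg hD.le _)]
        rw [lintegral_const_mul _ (by fun_prop), lintegral_map (by fun_prop) hY]

lemma ProbabilityTheory.iIndepFun.indepFun_truncation {Ω β : Type*} [MeasurableSpace Ω]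
    [MeasurableSpace β] [Zero β] {μ : Measure Ω} {Z : ℕ → Ω → β} (hZ : iIndepFun Z μ)
    (hZmeas : ∀ i, Measurable (Z i)) (k : ℕ) :
    IndepFun (fun ω j => if j ≤ k then Z j ω else 0) (Z (k + 1)) μ := by
  have hφ : Measurable fun (w : range (k + 1) → β) j =>
      if hj : j ∈ range (k + 1) then w ⟨j, hj⟩ else 0 :=
    measurable_pi_lambda _ fun j => by split <;> fun_prop
  have hψ : Measurable fun (w : ({k + 1} : Finset ℕ) → β) => w ⟨k + 1, mem_singleton_self _⟩ :=
    measurable_pi_apply _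
  have h := (hZ.indepFun_finset (range (k + 1)) {k + 1} (by simp) hZmeas).comp hφ hψ
  convert h using 1
  · ext ω j
    simp
  · rfl

noncomputable def gaussMarkov (a : ℝ) (z : ℕ → ℝ) : ℕ → ℝ
  | 0 => 0
  | i + 1 => a * gaussMarkov a z i + z (i + 1)

@[fun_prop]
lemma measurable_gaussMarkov (a : ℝ) (i : ℕ) :
    Measurable fun z : ℕ → ℝ => gaussMarkov a z i := by
  induction i with
  | zero => exact measurable_const
  | succ i ih => exact (ih.const_mul a).add (measurable_pi_apply (i + 1))

lemma gaussMarkov_congr (a : ℝ) {z z' : ℕ → ℝ} {k : ℕ} (h : ∀ j ≤ k, z j = z' j) :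
    gaussMarkov a z k = gaussMarkov a z' k := by
  induction k with
  | zero => rfl
  | succ k ih =>
    simp only [gaussMarkov, ih fun j hj => h j (hj.trans k.le_succ), h (k + 1) le_rfl]

lemma eq_gaussMarkov {Ω : Type*} {U Z : ℕ → Ω → ℝ} {a : ℝ} (hU0 : U 0 = fun _ => 0)
    (hU : ∀ i, U (i + 1) = fun ω => a * U i ω + Z (i + 1) ω) (ω : Ω) (i : ℕ) :
    U i ω = gaussMarkov a (Z · ω) i := by
  induction i with
  | zero => simp [hU0, gaussMarkov]
  | succ i ih => simp [hU, ih, gaussMarkov]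

noncomputable def lowerDeviation (u : ℕ → ℝ) (θ : ℝ) (m : ℕ) : ℝ :=
  ∑ i ∈ range m, u i * (u (i + 1) - θ * u i)

lemma lowerDeviation_congr {u u' : ℕ → ℝ} (θ : ℝ) {m : ℕ} (h : ∀ i ≤ m, u i = u' i) :
    lowerDeviation u θ m = lowerDeviation u' θ m :=
  sum_congr rfl fun i hi => by
    rw [h i (mem_range.1 hi).le, h (i + 1) (mem_range.1 hi)]

lemma lowerDeviation_succ (u : ℕ → ℝ) (θ : ℝ) (m : ℕ) :
    lowerDeviation u θ (m + 1) = lowerDeviation u θ m + u m * (u (m + 1) - θ * u m) :=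
  sum_range_succ _ _

@[fun_prop]
lemma measurable_lowerDeviation_gaussMarkov (a θ : ℝ) (m : ℕ) :
    Measurable fun z => lowerDeviation (gaussMarkov a z) θ m := by
  unfold lowerDeviation
  fun_prop

lemma lowerDeviation_neg_of_div_lt {u : ℕ → ℝ} {n : ℕ} (hn : 1 < n) (hu : u 1 ≠ 0) {θ : ℝ}
    (h : (∑ i ∈ range n, u i * u (i + 1)) / ∑ i ∈ range n, u i ^ 2 < θ) :
    lowerDeviation u θ n < 0 := by
  have hD : 0 < ∑ i ∈ range n, u i ^ 2 :=
    sum_pos' (fun _ _ => sq_nonneg _) ⟨1, mem_range.2 hn, by positivity⟩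
  have hsplit : lowerDeviation u θ n
      = ∑ i ∈ range n, u i * u (i + 1) - θ * ∑ i ∈ range n, u i ^ 2 := by
    rw [lowerDeviation, mul_sum, ← sum_sub_distrib]
    exact sum_congr rfl fun i _ => by ring
  rw [div_lt_iff₀ hD] at h
  linarith

lemma lowerDeviation_gaussMarkov_neg_of_aML_sub_lt {Ω : Type*} {U Z : ℕ → Ω → ℝ} {a : ℝ}
    (hU0 : U 0 = fun _ => 0) (hU : ∀ i, U (i + 1) = fun ω => a * U i ω + Z (i + 1) ω) {n : ℕ}
    (hn : 2 ≤ n) {η : ℝ} {ω : Ω} (hZ1 : Z 1 ω ≠ 0) (h : aML U n ω - a < -η) :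
    lowerDeviation (gaussMarkov a (Z · ω)) (a - η) n < 0 := by
  refine lowerDeviation_neg_of_div_lt (by omega) (by simpa [gaussMarkov] using hZ1) ?_
  simp only [aML, eq_gaussMarkov hU0 hU] at h
  rw [sum_Icc_one_sub_one_eq_sum_range (by simp [gaussMarkov]),
    sum_Icc_one_sub_one_eq_sum_range (by simp [gaussMarkov])] at h
  linarith

noncomputable def chernoffIntegrand (a η s c : ℝ) (k : ℕ) (z : ℕ → ℝ) : ℝ :=
  rexp (-s * lowerDeviation (gaussMarkov a z) (a - η) k + c * gaussMarkov a z k ^ 2)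

noncomputable def riccati (a v η s c : ℝ) : ℝ :=
  a ^ 2 * c - s * η + v * (2 * a * c - s) ^ 2 / (2 * (1 - 2 * v * c))

lemma betaSeq_succ (a σ η s : ℝ) (j : ℕ) (hj : 1 - 2 * σ ^ 2 * betaSeq a σ η s j ≠ 0) :
    betaSeq a σ η s (j + 1) = riccati a (σ ^ 2) η s (betaSeq a σ η s j) := by
  rcases j with _ | j
  · simp only [betaSeq, riccati]
    ring
  · rw [riccati, betaSeq]
    field_simp
    ring

lemma two_mul_sq_mul_betaSeq_lt_one {a σ η s : ℝ} {n : ℕ} (hσ : σ ≠ 0) (hs : s ∈ Sminus a σ η n)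
    {i : ℕ} (hi : i ≤ n) : 2 * σ ^ 2 * betaSeq a σ η s i < 1 := by
  rcases i with _ | i
  · simp [betaSeq]
  · have := hs.2 (i + 1) (mem_Icc.2 ⟨by omega, hi⟩)
    rw [lt_div_iff₀ (by positivity)] at this
    linarith

lemma lintegral_chernoffIntegrand_succ {Ω : Type*} [MeasurableSpace Ω] {μ : Measure Ω}
    [IsFiniteMeasure μ] {Z : ℕ → Ω → ℝ} (hZmeas : ∀ i, Measurable (Z i))
    (hZindep : iIndepFun Z μ) {v : ℝ≥0} (hZlaw : ∀ i, μ.map (Z i) = gaussianReal 0 v)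
    (a η s : ℝ) {c : ℝ} (hc : 2 * v * c < 1) (k : ℕ) :
    ∫⁻ ω, ENNReal.ofReal (chernoffIntegrand a η s c (k + 1) (Z · ω)) ∂μ
      = ENNReal.ofReal ((1 - 2 * v * c) ^ (-(1 / 2 : ℝ)))
        * ∫⁻ ω, ENNReal.ofReal (chernoffIntegrand a η s (riccati a v η s c) k (Z · ω)) ∂μ := by
  set Y : Ω → ℕ → ℝ := fun ω j => if j ≤ k then Z j ω else 0
  set b : (ℕ → ℝ) → ℝ := fun z => (2 * a * c - s) * gaussMarkov a z k
  set d : (ℕ → ℝ) → ℝ := fun z =>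
    -s * lowerDeviation (gaussMarkov a z) (a - η) k + (c * a ^ 2 - s * η) * gaussMarkov a z k ^ 2
  have hYmeas : Measurable Y :=
    measurable_pi_lambda _ fun j => by simp only [Y]; split <;> fun_prop
  have hY (ω : Ω) (i : ℕ) (hi : i ≤ k) : gaussMarkov a (Y ω) i = gaussMarkov a (Z · ω) i :=
    gaussMarkov_congr a fun j hj => if_pos (hj.trans hi)
  have hbY (ω : Ω) : b (Y ω) = b (Z · ω) := by simp only [b, hY ω k le_rfl]
  have hdY (ω : Ω) : d (Y ω) = d (Z · ω) := by
    simp only [d, hY ω k le_rfl, lowerDeviation_congr (a - η) (hY ω)]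
  have hsplit (z : ℕ → ℝ) :
      chernoffIntegrand a η s c (k + 1) z = rexp (c * z (k + 1) ^ 2 + b z * z (k + 1) + d z) := by
    simp only [chernoffIntegrand, lowerDeviation_succ, gaussMarkov, b, d]
    ring_nf
  have hmerge (z : ℕ → ℝ) : d z + v * b z ^ 2 / (2 * (1 - 2 * v * c))
      = -s * lowerDeviation (gaussMarkov a z) (a - η) k
        + riccati a v η s c * gaussMarkov a z k ^ 2 := by
    simp only [d, b, riccati]
    ring
  calc ∫⁻ ω, ENNReal.ofReal (chernoffIntegrand a η s c (k + 1) (Z · ω)) ∂μ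
      = ∫⁻ ω, ENNReal.ofReal
          (rexp (c * Z (k + 1) ω ^ 2 + b (Y ω) * Z (k + 1) ω + d (Y ω))) ∂μ := by
        simp only [hsplit, hbY, hdY]
    _ = _ := by
        rw [lintegral_exp_quadratic_of_indepFun hYmeas (hZmeas _)
          (hZindep.indepFun_truncation hZmeas k) (hZlaw _) hc (by fun_prop) (by fun_prop)]
        simp only [hbY, hdY, hmerge, chernoffIntegrand]

lemma lintegral_chernoffIntegrand_betaSeq {Ω : Type*} [MeasurableSpace Ω] {μ : Measure Ω}
    [IsProbabilityMeasure μ] {Z : ℕ → Ω → ℝ} (hZmeas : ∀ i, Measurable (Z i))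
    (hZindep : iIndepFun Z μ) {a σ : ℝ}
    (hZlaw : ∀ i, μ.map (Z i) = gaussianReal 0 ⟨σ ^ 2, sq_nonneg σ⟩) (η s : ℝ) (k j : ℕ)
    (hβ : ∀ i < k, 2 * σ ^ 2 * betaSeq a σ η s (j + i) < 1) :
    ∫⁻ ω, ENNReal.ofReal (chernoffIntegrand a η s (betaSeq a σ η s j) k (Z · ω)) ∂μ
      = ∏ i ∈ range k,
          ENNReal.ofReal ((1 - 2 * σ ^ 2 * betaSeq a σ η s (j + i)) ^ (-(1 / 2 : ℝ))) := by
  induction k generalizing j with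
  | zero => simp [chernoffIntegrand, lowerDeviation, gaussMarkov]
  | succ k ih =>
    have hj : 2 * σ ^ 2 * betaSeq a σ η s j < 1 := hβ 0 k.succ_pos
    have hstep :
        ∫⁻ ω, ENNReal.ofReal (chernoffIntegrand a η s (betaSeq a σ η s j) (k + 1) (Z · ω)) ∂μ
          = ENNReal.ofReal ((1 - 2 * σ ^ 2 * betaSeq a σ η s j) ^ (-(1 / 2 : ℝ)))
            * ∫⁻ ω, ENNReal.ofReal
                (chernoffIntegrand a η s (betaSeq a σ η s (j + 1)) k (Z · ω)) ∂μ := by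
      rw [betaSeq_succ a σ η s j (by linarith)]
      exact lintegral_chernoffIntegrand_succ hZmeas hZindep hZlaw a η s hj k
    rw [hstep, ih (j + 1) fun i hi => by simpa [add_assoc, add_comm 1] using hβ (i + 1) (by omega),
      prod_range_succ', add_zero, mul_comm]
    simp only [add_assoc, add_comm 1]

lemma measure_lowerDeviation_gaussMarkov_neg_le {Ω : Type*} [MeasurableSpace Ω] {μ : Measure Ω}
    [IsProbabilityMeasure μ] {Z : ℕ → Ω → ℝ} (hZmeas : ∀ i, Measurable (Z i))
    (hZindep : iIndepFun Z μ) {a σ : ℝ}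
    (hZlaw : ∀ i, μ.map (Z i) = gaussianReal 0 ⟨σ ^ 2, sq_nonneg σ⟩) (η : ℝ) {s : ℝ}
    (hs : 0 ≤ s) (n : ℕ) (hβ : ∀ i < n, 2 * σ ^ 2 * betaSeq a σ η s i < 1) :
    μ {ω | lowerDeviation (gaussMarkov a (Z · ω)) (a - η) n < 0}
      ≤ ∏ i ∈ range n, ENNReal.ofReal ((1 - 2 * σ ^ 2 * betaSeq a σ η s i) ^ (-(1 / 2 : ℝ))) := by
  have hiter := lintegral_chernoffIntegrand_betaSeq hZmeas hZindep hZlaw η s n 0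
    (by simpa only [zero_add] using hβ)
  simp only [zero_add, chernoffIntegrand, betaSeq, zero_mul, add_zero] at hiter
  exact (measure_lt_zero_le_lintegral_exp μ
    ((measurable_lowerDeviation_gaussMarkov a (a - η) n).comp (measurable_pi_lambda _ hZmeas))
    hs).trans_eq hiter

theorem statement1_general
    {Ω : Type*} [MeasurableSpace Ω] (μ : Measure Ω) [IsProbabilityMeasure μ]
    (a σ : ℝ) (hσ : 0 < σ)
    (Z : ℕ → Ω → ℝ) (hZmeas : ∀ i, Measurable (Z i))
    (hZindep : iIndepFun Z μ)
    (hZlaw : ∀ i, Measure.map (Z i) μ = gaussianReal 0 ⟨σ ^ 2, sq_nonneg σ⟩)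
    (U : ℕ → Ω → ℝ) (hU0 : U 0 = fun _ => 0)
    (hU : ∀ i, U (i + 1) = fun ω => a * U i ω + Z (i + 1) ω)
    (η : ℝ) (n : ℕ) (hn : 2 ≤ n)
    (s : ℝ) (hs : s ∈ Sminus a σ η n) :
    (μ {ω | aML U n ω - a < -η}).toReal
      ≤ ∏ ℓ ∈ Finset.Icc 1 (n - 1), (1 - 2 * σ ^ 2 * betaSeq a σ η s ℓ) ^ (-(1 / 2 : ℝ)) := by
  have hβ (i : ℕ) (hi : i < n) := two_mul_sq_mul_betaSeq_lt_one hσ.ne' hs hi.le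
  have hpos (ℓ : ℕ) (hℓ : ℓ ∈ Icc 1 (n - 1)) :
      0 ≤ (1 - 2 * σ ^ 2 * betaSeq a σ η s ℓ) ^ (-(1 / 2 : ℝ)) :=
    rpow_nonneg (by linarith [hβ ℓ (by rw [mem_Icc] at hℓ; omega)]) _
  have hv : (⟨σ ^ 2, sq_nonneg σ⟩ : ℝ≥0) ≠ 0 :=
    fun h => (pow_pos hσ 2).ne' (congrArg NNReal.toReal h)
  refine ENNReal.toReal_le_of_le_ofReal (prod_nonneg hpos) ?_
  rw [ENNReal.ofReal_prod_of_nonneg hpos,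
    prod_Icc_one_sub_one_eq_prod_range (by simp [betaSeq])]
  -- On `Z 1 = 0` the sums in `aML` vanish and `aML = 0 / 0 = 0`; this null event is set aside.
  calc μ {ω | aML U n ω - a < -η}
      ≤ μ {ω | lowerDeviation (gaussMarkov a (Z · ω)) (a - η) n < 0} + μ {ω | Z 1 ω = 0} :=
        (measure_mono fun ω (hω : aML U n ω - a < -η) => or_iff_not_imp_right.2 fun hZ1 =>
          lowerDeviation_gaussMarkov_neg_of_aML_sub_lt hU0 hU hn hZ1 hω).trans
          (measure_union_le _ _)
    _ = μ {ω | lowerDeviation (gaussMarkov a (Z · ω)) (a - η) n < 0} := by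
        rw [measure_eq_zero_of_map_eq_gaussianReal (hZmeas 1) hv (hZlaw 1), add_zero]
    _ ≤ _ := measure_lowerDeviation_gaussMarkov_neg_le hZmeas hZindep hZlaw η hs.1.le n hβ

theorem statement1
    {Ω : Type*} [MeasurableSpace Ω] (μ : Measure Ω) [IsProbabilityMeasure μ]
    (a σ : ℝ) (ha : 1 < a) (hσ : 0 < σ)
    (Z : ℕ → Ω → ℝ) (hZmeas : ∀ i, Measurable (Z i))
    (hZindep : iIndepFun Z μ)
    (hZlaw : ∀ i, Measure.map (Z i) μ = gaussianReal 0 ⟨σ ^ 2, sq_nonneg σ⟩)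
    (U : ℕ → Ω → ℝ) (hU0 : U 0 = fun _ => 0)
    (hU : ∀ i, U (i + 1) = fun ω => a * U i ω + Z (i + 1) ω)
    (η : ℝ) (hη : 0 < η) (n : ℕ) (hn : 2 ≤ n)
    (s : ℝ) (hs : s ∈ Sminus a σ η n) :
    (μ {ω | aML U n ω - a < -η}).toReal
      ≤ ∏ ℓ ∈ Finset.Icc 1 (n - 1), (1 - 2 * σ ^ 2 * betaSeq a σ η s ℓ) ^ (-(1 / 2 : ℝ)) :=
  statement1_general μ a σ hσ Z hZmeas hZindep hZlaw U hU0 hU η n hn s hs
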